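/- arXiv:1502.06520 — 3 statements merged into one kernel-verified Lean document; each statement's English description precedes it below -/
import Mathlib

section
/- Let s ≠ t be reflections in GL_n(ℚ) that generate a finite subgroup R = ⟨s, t⟩. Then ℚ[x_1,…,x_n]^R_det ∩ (ℚ[x_1,…,x_n]^s + ℚ[x_1,…,x_n]^t) = {0}; that is, the only relative invariant of R lying in the ℚ-linear span of the s-invariant polynomials together with the t-invariant polynomials is 0. -/
/-!
Write `f = a + b` with `s a = a` and `t b = b`. A reflection has determinant `-1`, since its
`±1`-eigenspaces are complementary and the `-1`-eigenspace is a line; so a relative invariant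
satisfies `s f = t f = -f`, hence `t a = a - 2 f`, `st a = a + 2 f` and `st f = f`. By induction
`(st)^k a = a + 2k f`, and since `st` has finite order `N > 0` this forces `2N f = 0`, so `f = 0`.
-/

open Matrix MvPolynomial

/-- The action of an `n × n` rational matrix on `ℚ[x_1, …, x_n]` by linear substitution
of the variables: `x_i ↦ ∑ j, g j i • x_j`. -/
noncomputable def matAct {n : ℕ} (g : Matrix (Fin n) (Fin n) ℚ) :
    MvPolynomial (Fin n) ℚ →ₐ[ℚ] MvPolynomial (Fin n) ℚ :=
  MvPolynomial.aeval fun i => ∑ j, MvPolynomial.C (g j i) * MvPolynomial.X j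

/-- The fixed subspace of `g ∈ GL_n(ℚ)` acting on `ℚ^n`; for a reflection this is its
reflecting hyperplane. -/
noncomputable def fixedSpace {n : ℕ} (g : GL (Fin n) ℚ) : Submodule ℚ (Fin n → ℚ) :=
  LinearMap.ker (Matrix.toLin' (g : Matrix (Fin n) (Fin n) ℚ) - LinearMap.id)

/-- A reflection is an involution in `GL_n(ℚ)` whose fixed subspace has dimension `n - 1`. -/
def IsReflection {n : ℕ} (r : GL (Fin n) ℚ) : Prop :=
  r * r = 1 ∧ Module.finrank ℚ (fixedSpace r) = n - 1

/-- The subspace `ℚ[x_1, …, x_n]^H` of polynomials invariant under a subgroup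
`H ≤ GL_n(ℚ)`. -/
noncomputable def polyInvariants {n : ℕ} (H : Subgroup (GL (Fin n) ℚ)) :
    Submodule ℚ (MvPolynomial (Fin n) ℚ) where
  carrier := {f | ∀ g ∈ H, matAct ((g : GL (Fin n) ℚ) : Matrix (Fin n) (Fin n) ℚ) f = f}
  add_mem' := by
    intro a b ha hb g hg
    rw [map_add, ha g hg, hb g hg]
  zero_mem' := by
    intro g hg
    rw [map_zero]
  smul_mem' := by
    intro c f hf g hg
    rw [_root_.map_smul, hf g hg]

/-- The relative invariants `ℚ[x_1, …, x_n]^H_det` (with respect to the determinant) of a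
subgroup `H ≤ GL_n(ℚ)`: the polynomials `f` with `g • f = det g • f` for all `g ∈ H`. -/
noncomputable def polyRelInvariants {n : ℕ} (H : Subgroup (GL (Fin n) ℚ)) :
    Submodule ℚ (MvPolynomial (Fin n) ℚ) where
  carrier := {f | ∀ g ∈ H,
    matAct ((g : GL (Fin n) ℚ) : Matrix (Fin n) (Fin n) ℚ) f
      = ((g : GL (Fin n) ℚ) : Matrix (Fin n) (Fin n) ℚ).det • f}
  add_mem' := by
    intro a b ha hb g hg
    rw [map_add, ha g hg, hb g hg, smul_add]
  zero_mem' := by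
    intro g hg
    rw [map_zero, smul_zero]
  smul_mem' := by
    intro c f hf g hg
    rw [_root_.map_smul, hf g hg, smul_comm]

/-- The subspace `ℚ[x_1, …, x_n]^g` of polynomials fixed by a single element
`g ∈ GL_n(ℚ)`. -/
noncomputable def polyInvariantsElem {n : ℕ} (g : GL (Fin n) ℚ) :
    Submodule ℚ (MvPolynomial (Fin n) ℚ) where
  carrier := {f | matAct ((g : GL (Fin n) ℚ) : Matrix (Fin n) (Fin n) ℚ) f = f}
  add_mem' := by
    intro a b ha hb
    rw [Set.mem_setOf_eq, map_add, ha, hb]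
  zero_mem' := by
    rw [Set.mem_setOf_eq, map_zero]
  smul_mem' := by
    intro c f hf
    rw [Set.mem_setOf_eq, _root_.map_smul, hf]

namespace LinearMap

open Module

variable {K V : Type*} [Field K] [AddCommGroup V] [Module K V]

theorem isCompl_ker_sub_one_ker_add_one {T : End K V} (h2 : (2 : K) ≠ 0) (hT : T * T = 1) :
    IsCompl (ker (T - 1)) (ker (T + 1)) := by
  have hTT (x : V) : T (T x) = x := congr($hT x)
  refine ⟨Submodule.disjoint_def.mpr fun x hx₁ hx₂ => ?_, codisjoint_iff.mpr ?_⟩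
  · rw [mem_ker, sub_apply, End.one_apply, sub_eq_zero] at hx₁
    rw [mem_ker, add_apply, End.one_apply, hx₁, ← two_smul K x] at hx₂
    exact (smul_eq_zero.mp hx₂).resolve_left h2
  · refine Submodule.eq_top_iff'.mpr fun x => ?_
    have hx : x = (2 : K)⁻¹ • (x + T x) + (2 : K)⁻¹ • (x - T x) := by
      rw [← smul_add, add_add_sub_cancel, ← two_smul K x, inv_smul_smul₀ h2]
    rw [hx]
    refine Submodule.add_mem_sup ?_ ?_ <;>
      simp [hTT, add_comm]

variable [FiniteDimensional K V]

theorem det_eq_neg_one_pow_of_isCompl {T : End K V} {P N : Submodule K V} (h : IsCompl P N)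
    (hP : ∀ x ∈ P, T x = x) (hN : ∀ x ∈ N, T x = -x) : T.det = (-1) ^ finrank K N := by
  let e := Submodule.prodEquivOfIsCompl P N h
  have hconj :
      T = (e : P × N →ₗ[K] V) ∘ₗ (id.prodMap (-id)) ∘ₗ (e.symm : V →ₗ[K] P × N) := by
    ext x
    obtain ⟨y, rfl⟩ := e.surjective x
    simp [e, hP, hN]
  rw [hconj, det_conj, det_prodMap, det_id, one_mul, ← neg_one_smul K id, det_smul, det_id,
    mul_one]

theorem det_eq_neg_one_pow_of_mul_self_eq_one {T : End K V} (h2 : (2 : K) ≠ 0) (hT : T * T = 1) :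
    T.det = (-1) ^ (finrank K V - finrank K (ker (T - 1))) := by
  have h := isCompl_ker_sub_one_ker_add_one h2 hT
  rw [det_eq_neg_one_pow_of_isCompl h, ← Submodule.finrank_add_eq_of_isCompl h,
    Nat.add_sub_cancel_left]
  · intro x hx
    rwa [mem_ker, sub_apply, End.one_apply, sub_eq_zero] at hx
  · intro x hx
    rwa [mem_ker, add_apply, End.one_apply, add_eq_zero_iff_eq_neg] at hx

end LinearMap

theorem matAct_one {n : ℕ} : matAct (1 : Matrix (Fin n) (Fin n) ℚ) = AlgHom.id ℚ _ := by
  refine algHom_ext fun i => ?_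
  simp [matAct, Matrix.one_apply]

theorem matAct_mul {n : ℕ} (M N : Matrix (Fin n) (Fin n) ℚ) :
    matAct (M * N) = (matAct M).comp (matAct N) := by
  refine algHom_ext fun i => ?_
  simp only [matAct, aeval_X, AlgHom.comp_apply, map_sum, _root_.map_mul, algebraMap_eq, aeval_C,
    mul_apply, Finset.sum_mul, Finset.mul_sum]
  rw [Finset.sum_comm]
  exact Finset.sum_congr rfl fun j _ => Finset.sum_congr rfl fun k _ => by ring

noncomputable def matActHom (n : ℕ) :
    Matrix (Fin n) (Fin n) ℚ →* AddMonoid.End (MvPolynomial (Fin n) ℚ) where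
  toFun g := (matAct g).toAddMonoidHom
  map_one' := by rw [matAct_one]; rfl
  map_mul' M N := by rw [matAct_mul]; rfl

theorem IsReflection.det_eq_neg_one {n : ℕ} {r : GL (Fin n) ℚ} (hr : IsReflection r)
    (hn : n ≠ 0) : (r : Matrix (Fin n) (Fin n) ℚ).det = -1 := by
  set T := toLin' (r : Matrix (Fin n) (Fin n) ℚ)
  have hsq : T * T = 1 := by
    rw [Module.End.mul_eq_comp, ← toLin'_mul, ← Units.val_mul, hr.1, Units.val_one, toLin'_one]
    rfl
  have hfix : Module.finrank ℚ (LinearMap.ker (T - 1)) = n - 1 := hr.2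
  rw [← LinearMap.det_toLin', LinearMap.det_eq_neg_one_pow_of_mul_self_eq_one two_ne_zero hsq,
    hfix, Module.finrank_fin_fun, Nat.sub_sub_self (Nat.one_le_iff_ne_zero.mpr hn), pow_one]

theorem add_eq_zero_of_isOfFinOrder_mul {M : Type*} [AddCommGroup M] [IsAddTorsionFree M]
    {σ τ : AddMonoid.End M} {a b : M} (ha : σ a = a) (hb : τ b = b)
    (hσ : σ (a + b) = -(a + b)) (hτ : τ (a + b) = -(a + b)) (hfin : IsOfFinOrder (σ * τ)) :
    a + b = 0 := by
  have hτa : τ a = a - 2 • (a + b) := by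
    rw [map_add, hb, ← eq_sub_iff_add_eq] at hτ
    rw [hτ, two_nsmul]
    abel
  have hστa : (σ * τ) a = a + 2 • (a + b) := by
    rw [AddMonoid.End.coe_mul, Function.comp_apply, hτa, map_sub, map_nsmul, ha, hσ, smul_neg,
      sub_neg_eq_add]
  have hστc : (σ * τ) (a + b) = a + b := by
    rw [AddMonoid.End.coe_mul, Function.comp_apply, hτ, map_neg, hσ, neg_neg]
  have hpow : ∀ k : ℕ, ((σ * τ) ^ k) a = a + (2 * k) • (a + b) := by
    intro k
    induction k with
    | zero => simp
    | succ k ih =>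
      rw [pow_succ', AddMonoid.End.coe_mul, Function.comp_apply, ih, map_add, map_nsmul, hστa,
        hστc, mul_add, add_nsmul, mul_one]
      abel
  obtain ⟨N, hN, hpowN⟩ := hfin.exists_pow_eq_one
  have : (2 * N) • (a + b) = 0 := by
    simpa [hpowN] using (hpow N).symm
  exact (nsmul_eq_zero_iff_right (by lia)).mp this

theorem matAct_eq_neg_of_mem_polyRelInvariants {n : ℕ} {H : Subgroup (GL (Fin n) ℚ)}
    {f : MvPolynomial (Fin n) ℚ} (hf : f ∈ polyRelInvariants H) {r : GL (Fin n) ℚ}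
    (hrH : r ∈ H) (hr : IsReflection r) (hn : n ≠ 0) :
    matAct (r : Matrix (Fin n) (Fin n) ℚ) f = -f := by
  rw [hf r hrH, hr.det_eq_neg_one hn, neg_one_smul]

/-- If `s ≠ t` are reflections in `GL_n(ℚ)` generating a finite subgroup
`R = ⟨s, t⟩`, then the only relative invariant of `R` lying in the sum of the subspaces of
`s`-invariant and `t`-invariant polynomials is `0`. -/
theorem relInvariants_inf_sup_invariants_eq_bot {n : ℕ} (s t : GL (Fin n) ℚ)
    (hs : IsReflection s) (ht : IsReflection t) (hst : s ≠ t)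
    (hfin : ((Subgroup.closure {s, t} : Subgroup (GL (Fin n) ℚ)) : Set (GL (Fin n) ℚ)).Finite) :
    polyRelInvariants (Subgroup.closure {s, t}) ⊓
      (polyInvariantsElem s ⊔ polyInvariantsElem t) = ⊥ := by
  have hn : n ≠ 0 := by
    rintro rfl
    exact hst (Units.ext (Subsingleton.elim _ _))
  refine eq_bot_iff.mpr fun f hf => ?_
  obtain ⟨hrel, hsum⟩ := Submodule.mem_inf.mp hf
  obtain ⟨a, ha, b, hb, rfl⟩ := Submodule.mem_sup.mp hsum
  have hsR : s ∈ Subgroup.closure {s, t} := Subgroup.subset_closure (Set.mem_insert _ _)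
  have htR : t ∈ Subgroup.closure {s, t} := Subgroup.subset_closure (Set.mem_insert_of_mem _ rfl)
  have : Finite (Subgroup.closure {s, t}) := hfin.to_subtype
  have hfinOrder : IsOfFinOrder (s * t) :=
    (Subgroup.subtype _).isOfFinOrder
      (isOfFinOrder_of_finite (⟨s * t, mul_mem hsR htR⟩ : Subgroup.closure {s, t}))
  let ρ := (matActHom n).comp (Units.coeHom (Matrix (Fin n) (Fin n) ℚ))
  have hρ : IsOfFinOrder (ρ s * ρ t) := map_mul ρ s t ▸ ρ.isOfFinOrder hfinOrder
  have hσ : ρ s (a + b) = -(a + b) := matAct_eq_neg_of_mem_polyRelInvariants hrel hsR hs hn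
  have hτ : ρ t (a + b) = -(a + b) := matAct_eq_neg_of_mem_polyRelInvariants hrel htR ht hn
  exact add_eq_zero_of_isOfFinOrder_mul (σ := ρ s) (τ := ρ t) ha hb hσ hτ hρ
end

section
/- In the formal power series ring ℚ[[t]], the following identity holds: t + 2t·(1 − t²)^{−3} − 3t·(1 − t²)^{−2}·(1 − t⁴)^{−1} = Σ_{n=1}^{∞} ((2n² − 5 − 3·(−1)^n)/8) · t^{2n+1}. In particular, this series equals 2t⁷ + 3t⁹ + 6t¹¹ + 8t¹³ + 12t¹⁵ + 15t¹⁷ + ⋯ (the coefficients in degrees 1, 3, and 5 vanish). -/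
open PowerSeries

/-- The coefficient sequence of `Σ_{n ≥ 1} ((2n² − 5 − 3·(−1)ⁿ)/8) · t^{2n+1}`:
for `k = 2n + 1` with `n ≥ 1` it is `(2n² − 5 − 3·(−1)ⁿ)/8`, and it is `0` otherwise. -/
noncomputable def kacMoodyCoeff (k : ℕ) : ℚ :=
  if 3 ≤ k ∧ Odd k then
    (2 * (((k - 1) / 2 : ℕ) : ℚ) ^ 2 - 5 - 3 * (-1 : ℚ) ^ ((k - 1) / 2 : ℕ)) / 8
  else 0

/-- The formal power series `t + 2t·(1 − t²)⁻³ − 3t·(1 − t²)⁻²·(1 − t⁴)⁻¹ ∈ ℚ[[t]]`. -/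
noncomputable def kacMoodySeries : PowerSeries ℚ :=
  X + 2 * X * ((1 - X ^ 2)⁻¹) ^ 3 - 3 * X * ((1 - X ^ 2)⁻¹) ^ 2 * (1 - X ^ 4)⁻¹

/-! Multiplying by `(1 - t²)²(1 - t⁴) = 1 - 2t² + 2t⁶ - t⁸` clears the denominators of
`kacMoodySeries` and leaves `2t⁷ - t⁹`. The right-hand side satisfies the same identity: with
`u = t²`, the operator `(1 - u)³(1 + u)` annihilates the quasi-polynomial `2n² - 5 - 3(-1)ⁿ`, and
the only defect is at `t`, whose coefficient is `0` where the formula would give `-1`; it produces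
the `-t⁹`. As `ℚ⟦t⟧` is a domain, the two series coincide. -/

lemma kacMoodyCoeff_of_even {k : ℕ} (hk : Even k) : kacMoodyCoeff k = 0 :=
  if_neg fun h => Nat.not_odd_iff_even.mpr hk h.2

lemma kacMoodyCoeff_two_mul_add_one {n : ℕ} (hn : 1 ≤ n) :
    kacMoodyCoeff (2 * n + 1) = (2 * (n : ℚ) ^ 2 - 5 - 3 * (-1 : ℚ) ^ n) / 8 := by
  rw [kacMoodyCoeff, if_pos ⟨by omega, odd_two_mul_add_one n⟩, show (2 * n + 1 - 1) / 2 = n by omega]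

lemma kacMoodyCoeff_recurrence {n : ℕ} (hn : n ≠ 1) :
    kacMoodyCoeff (n + 8) - 2 * kacMoodyCoeff (n + 6) + 2 * kacMoodyCoeff (n + 2)
      - kacMoodyCoeff n = 0 := by
  rcases Nat.even_or_odd n with he | ⟨m, rfl⟩
  · simp only [kacMoodyCoeff_of_even, he, Even.add, even_two, show Even 6 by decide,
      show Even 8 by decide]
    ring
  · have hm : 1 ≤ m := by omega
    rw [show 2 * m + 1 + 8 = 2 * (m + 4) + 1 by ring, show 2 * m + 1 + 6 = 2 * (m + 3) + 1 by ring,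
      show 2 * m + 1 + 2 = 2 * (m + 1) + 1 by ring, kacMoodyCoeff_two_mul_add_one (by omega),
      kacMoodyCoeff_two_mul_add_one (by omega), kacMoodyCoeff_two_mul_add_one (by omega),
      kacMoodyCoeff_two_mul_add_one hm]
    push_cast
    ring

lemma mk_kacMoodyCoeff_mul :
    mk kacMoodyCoeff * ((1 - X ^ 2) ^ 2 * (1 - X ^ 4)) = 2 * X ^ 7 - X ^ 9 := by
  set f := mk kacMoodyCoeff
  have hexpand : f * ((1 - X ^ 2) ^ 2 * (1 - X ^ 4)) =
      f - C 2 * (X ^ 2 * f) + C 2 * (X ^ 6 * f) - X ^ 8 * f := by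
    rw [map_ofNat]; ring
  have hrhs : (2 * X ^ 7 - X ^ 9 : ℚ⟦X⟧) = C 2 * X ^ 7 - X ^ 9 := by rw [map_ofNat]
  ext n
  rw [hexpand, hrhs]
  simp only [map_sub, map_add, coeff_C_mul, coeff_X_pow_mul', coeff_X_pow, f, coeff_mk]
  rcases lt_or_ge n 8 with hn | hn
  · interval_cases n <;> norm_num [kacMoodyCoeff, Nat.odd_iff]
  · obtain ⟨m, rfl⟩ := Nat.exists_eq_add_of_le' hn
    rcases eq_or_ne m 1 with rfl | hm
    · norm_num [kacMoodyCoeff, Nat.odd_iff]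
    · simp (disch := omega) only [if_pos, if_neg, show m + 8 - 2 = m + 6 by omega,
        show m + 8 - 6 = m + 2 by omega, Nat.add_sub_cancel]
      linear_combination kacMoodyCoeff_recurrence hm

lemma kacMoodySeries_mul :
    kacMoodySeries * ((1 - X ^ 2) ^ 2 * (1 - X ^ 4)) = 2 * X ^ 7 - X ^ 9 := by
  set p : ℚ⟦X⟧ := 1 - X ^ 2
  set q : ℚ⟦X⟧ := 1 - X ^ 4
  have ha : p⁻¹ * p = 1 := PowerSeries.inv_mul_cancel _ (by simp [p])
  have hb : q⁻¹ * q = 1 := PowerSeries.inv_mul_cancel _ (by simp [q])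
  -- with `a = p⁻¹`, `b = q⁻¹` and `q = p (1 + X²)`: `a³p²q - (1 + X²) = (1 + X²)(ap - 1)(a²p² + ap + 1)`
  -- and `a²p²bq - 1 = (ap - 1)(ap + 1)bq + (bq - 1)`
  unfold kacMoodySeries
  linear_combination
    (2 * X * (1 + X ^ 2) * (p⁻¹ ^ 2 * p ^ 2 + p⁻¹ * p + 1) - 3 * X * (p⁻¹ * p + 1) * q⁻¹ * q) * ha
      - 3 * X * hb

lemma kacMoodySeries_eq_mk : kacMoodySeries = mk kacMoodyCoeff := by
  have hD : ((1 - X ^ 2) ^ 2 * (1 - X ^ 4) : ℚ⟦X⟧) ≠ 0 := fun h => by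
    simpa using congrArg constantCoeff h
  exact mul_right_cancel₀ hD (kacMoodySeries_mul.trans mk_kacMoodyCoeff_mul.symm)

/-- In `ℚ[[t]]` one has
`t + 2t(1 − t²)⁻³ − 3t(1 − t²)⁻²(1 − t⁴)⁻¹ = Σ_{n=1}^∞ ((2n² − 5 − 3(−1)ⁿ)/8) t^{2n+1}`;
in particular this series equals `2t⁷ + 3t⁹ + 6t¹¹ + 8t¹³ + 12t¹⁵ + 15t¹⁷ + ⋯`
(the coefficients in degrees 1, 3 and 5 vanish). -/
theorem kacMoodySeries_eq :
    kacMoodySeries = PowerSeries.mk kacMoodyCoeff ∧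
    (∀ n : ℕ, 1 ≤ n → coeff (2 * n + 1) kacMoodySeries
      = (2 * (n : ℚ) ^ 2 - 5 - 3 * (-1 : ℚ) ^ n) / 8) ∧
    coeff 1 kacMoodySeries = 0 ∧ coeff 3 kacMoodySeries = 0 ∧
    coeff 5 kacMoodySeries = 0 ∧ coeff 7 kacMoodySeries = 2 ∧
    coeff 9 kacMoodySeries = 3 ∧ coeff 11 kacMoodySeries = 6 ∧
    coeff 13 kacMoodySeries = 8 ∧ coeff 15 kacMoodySeries = 12 ∧
    coeff 17 kacMoodySeries = 15 := by
  refine ⟨kacMoodySeries_eq_mk, fun n hn => ?_, ?_⟩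
  · rw [kacMoodySeries_eq_mk, coeff_mk, kacMoodyCoeff_two_mul_add_one hn]
  · simp only [kacMoodySeries_eq_mk, coeff_mk]
    norm_num [kacMoodyCoeff, Nat.odd_iff]
end

section
/- Let X be a finite set and let S be a nonempty finite family of subsets of X that is downward closed (if I ∈ S and J ⊆ I then J ∈ S), regarded as a poset under inclusion. Let S̄ ⊆ S be the full subposet consisting of all intersections of nonempty collections of maximal elements of S. Then for every ring R, every functor M : S^op → Mod_R, and every i ≥ 0, the canonical restriction map lim^i_{S^op} M → lim^i_{S̄^op} (M restricted to S̄^op) is an isomorphism, where lim^i denotes the i-th right derived functor of the limit. -/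
open CategoryTheory CategoryTheory.Limits Opposite

/-- `I` is a maximal element of the family `S` of subsets of `α`. -/
def IsMaxIn {α : Type} [DecidableEq α] (S : Finset (Finset α)) (I : Finset α) : Prop :=
  I ∈ S ∧ ∀ J ∈ S, I ⊆ J → J = I

/-- `I` is an intersection of a nonempty collection of maximal elements of `S`. -/
def IsInterOfMax {α : Type} [DecidableEq α] (S : Finset (Finset α)) (I : Finset α) : Prop :=
  ∃ (T : Finset (Finset α)) (hT : T.Nonempty),
    (∀ J ∈ T, IsMaxIn S J) ∧ I = T.inf' hT id

/-- The family `S`, regarded as a poset under inclusion. -/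
abbrev SPoset {α : Type} [DecidableEq α] (S : Finset (Finset α)) : Type :=
  {I : Finset α // I ∈ S}

/-- The full subposet `S̄ ⊆ S` of all intersections of nonempty collections of maximal
elements of `S`.  (When `S` is downward closed every such intersection belongs to `S`.) -/
abbrev SBarPoset {α : Type} [DecidableEq α] (S : Finset (Finset α)) : Type :=
  {I : Finset α // I ∈ S ∧ IsInterOfMax S I}

/-- The inclusion functor of the full subposet `S̄ ⊆ S`. -/
def sbarIncl {α : Type} [DecidableEq α] (S : Finset (Finset α)) : SBarPoset S ⥤ SPoset S :=
  Monotone.functor (f := fun I => (⟨I.1, I.2.1⟩ : SPoset S)) fun _ _ h => h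

/-- The limit functor on diagrams of modules indexed by a small category is additive. -/
noncomputable instance limAdditiveModuleCat (J : Type) [SmallCategory J] (R : Type) [Ring R] :
    (lim : (J ⥤ ModuleCat R) ⥤ ModuleCat R).Additive :=
  Functor.additive_of_preserves_binary_products _

instance whiskeringLeftAdditive {α : Type} [DecidableEq α] (S : Finset (Finset α))
    (R : Type) [Ring R] :
    (((Functor.whiskeringLeft (SBarPoset S)ᵒᵖ (SPoset S)ᵒᵖ (ModuleCat R)).obj
      (sbarIncl S).op)).Additive where
  map_add := by intros; ext; rfl

/-- The canonical natural transformation from the limit over `Sᵒᵖ` to the limit over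
`S̄ᵒᵖ` of the restricted diagram, given by restriction of cones. -/
noncomputable def limRestrictNT {α : Type} [DecidableEq α] (S : Finset (Finset α))
    (R : Type) [Ring R] :
    (lim : ((SPoset S)ᵒᵖ ⥤ ModuleCat R) ⥤ ModuleCat R) ⟶
      (Functor.whiskeringLeft (SBarPoset S)ᵒᵖ (SPoset S)ᵒᵖ (ModuleCat R)).obj (sbarIncl S).op ⋙
        lim where
  app M := limit.pre M (sbarIncl S).op
  naturality := by
    intro M N f
    apply limit.hom_ext
    intro j
    simp

/-!
`J ↦ ⋂ {K maximal in S | J ⊆ K}` is a reflection of `S` onto `S̄`, so the inclusion `S̄ ⊆ S` is a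
right adjoint, hence final, and restricting cones along it is an isomorphism of limit functors;
so are its derived functors. Restriction along the inclusion is exact and is right adjoint to
restriction along the reflection, which is exact too, so it preserves injectives and carries
injective resolutions of `M` to injective resolutions of `M|S̄`; this computes the derived
functors of `restrict ⋙ lim` as `lim^i` over `S̄ᵒᵖ`.
-/

namespace CategoryTheory

variable {C D E : Type*} [Category C] [Category D] [Category E]

instance NatTrans.isIso_rightDerived [Abelian C] [HasInjectiveResolutions C] [Abelian D]
    {F G : C ⥤ D} [F.Additive] [G.Additive] (τ : F ⟶ G) [IsIso τ] (n : ℕ) :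
    IsIso (NatTrans.rightDerived τ n) :=
  ⟨NatTrans.rightDerived (inv τ) n, by simp [← NatTrans.rightDerived_comp],
    by simp [← NatTrans.rightDerived_comp]⟩

lemma Adjunction.whiskeringLeft_preservesInjectiveObjects {J K : Type*} [Category J] [Category K]
    [Abelian E] {L : J ⥤ K} {G : K ⥤ J} (adj : L ⊣ G) :
    ((Functor.whiskeringLeft J K E).obj L).PreservesInjectiveObjects :=
  Functor.preservesInjectiveObjects_of_adjunction_of_preservesMonomorphisms
    (adj.whiskerLeft (C := E))

variable [Abelian C] [Abelian D]

noncomputable def InjectiveResolution.map (Φ : C ⥤ D) [Φ.Additive] [Φ.PreservesHomology]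
    [Φ.PreservesInjectiveObjects] {X : C} (P : InjectiveResolution X) :
    InjectiveResolution (Φ.obj X) where
  cocomplex := (Φ.mapHomologicalComplex _).obj P.cocomplex
  injective n := Φ.injective_obj_of_injective (P.injective n)
  ι := (HomologicalComplex.singleMapHomologicalComplex Φ (ComplexShape.up ℕ) 0).inv.app X ≫
    (Φ.mapHomologicalComplex _).map P.ι

noncomputable def Functor.rightDerivedCompObjIso [HasInjectiveResolutions C]
    [HasInjectiveResolutions D] [Abelian E] (Φ : C ⥤ D) [Φ.Additive] [Φ.PreservesHomology]
    [Φ.PreservesInjectiveObjects] (F : D ⥤ E) [F.Additive] (X : C) (n : ℕ) :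
    ((Φ ⋙ F).rightDerived n).obj X ≅ (F.rightDerived n).obj (Φ.obj X) :=
  let P := injectiveResolution X
  P.isoRightDerivedObj (Φ ⋙ F) n ≪≫ ((P.map Φ).isoRightDerivedObj F n).symm

end CategoryTheory

section MaxClosure

variable {α : Type} [DecidableEq α] (S : Finset (Finset α))

lemma exists_isMaxIn_superset {J : Finset α} (hJ : J ∈ S) : ∃ K, IsMaxIn S K ∧ J ⊆ K := by
  obtain ⟨K, hJK, hKS, hKmax⟩ := S.exists_le_maximal hJ
  exact ⟨K, ⟨hKS, fun K' hK'S hKK' => le_antisymm (hKmax hK'S hKK') hKK'⟩, hJK⟩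

open Classical in
noncomputable def maxAbove (J : Finset α) : Finset (Finset α) :=
  {K ∈ S | IsMaxIn S K ∧ J ⊆ K}

lemma mem_maxAbove {J K : Finset α} : K ∈ maxAbove S J ↔ IsMaxIn S K ∧ J ⊆ K := by
  classical
  simp only [maxAbove, Finset.mem_filter, and_iff_right_iff_imp]
  exact fun h => h.1.1

lemma maxAbove_nonempty {J : Finset α} (hJ : J ∈ S) : (maxAbove S J).Nonempty :=
  let ⟨K, hK⟩ := exists_isMaxIn_superset S hJ
  ⟨K, (mem_maxAbove S).2 hK⟩

/-- The least element of `S̄` above `J`. -/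
noncomputable def maxClosure {J : Finset α} (hJ : J ∈ S) : Finset α :=
  (maxAbove S J).inf' (maxAbove_nonempty S hJ) id

variable {S}

lemma subset_maxClosure {J : Finset α} (hJ : J ∈ S) : J ⊆ maxClosure S hJ :=
  Finset.le_inf' _ _ fun _ hK => ((mem_maxAbove S).1 hK).2

lemma isInterOfMax_maxClosure {J : Finset α} (hJ : J ∈ S) : IsInterOfMax S (maxClosure S hJ) :=
  ⟨maxAbove S J, maxAbove_nonempty S hJ, fun _ hK => ((mem_maxAbove S).1 hK).1, rfl⟩

lemma maxClosure_mem (hdown : ∀ I ∈ S, ∀ J ⊆ I, J ∈ S) {J : Finset α} (hJ : J ∈ S) :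
    maxClosure S hJ ∈ S :=
  let ⟨K, hK⟩ := maxAbove_nonempty S hJ
  hdown K ((mem_maxAbove S).1 hK).1.1 _ (Finset.inf'_le id hK)

lemma maxClosure_subset {I J : Finset α} (hJ : J ∈ S) (hI : IsInterOfMax S I) (hJI : J ⊆ I) :
    maxClosure S hJ ⊆ I := by
  obtain ⟨T, hT, hTmax, rfl⟩ := hI
  refine Finset.le_inf' _ _ fun K hK => Finset.inf'_le _ ((mem_maxAbove S).2 ⟨hTmax K hK, ?_⟩)
  exact hJI.trans (Finset.inf'_le id hK)

lemma gc_maxClosure_sbarIncl (hdown : ∀ I ∈ S, ∀ J ⊆ I, J ∈ S) :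
    GaloisConnection (fun J : SPoset S => (⟨maxClosure S J.2, maxClosure_mem hdown J.2,
      isInterOfMax_maxClosure J.2⟩ : SBarPoset S)) (sbarIncl S).obj := fun J I =>
  ⟨fun h => (subset_maxClosure J.2).trans h, fun h => maxClosure_subset J.2 I.2.2 h⟩

noncomputable def maxClosureAdjunction (hdown : ∀ I ∈ S, ∀ J ⊆ I, J ∈ S) :
    (gc_maxClosure_sbarIncl hdown).monotone_l.functor ⊣ sbarIncl S :=
  (gc_maxClosure_sbarIncl hdown).adjunction

lemma sbarIncl_final (hdown : ∀ I ∈ S, ∀ J ⊆ I, J ∈ S) : (sbarIncl S).Final :=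
  Functor.final_of_adjunction (maxClosureAdjunction hdown)

lemma isIso_limRestrictNT (hdown : ∀ I ∈ S, ∀ J ⊆ I, J ∈ S) (R : Type) [Ring R] :
    IsIso (limRestrictNT S R) := by
  have := sbarIncl_final hdown
  have : ∀ M : (SPoset S)ᵒᵖ ⥤ ModuleCat R, IsIso ((limRestrictNT S R).app M) := fun M =>
    inferInstanceAs (IsIso (limit.pre M (sbarIncl S).op))
  exact NatIso.isIso_of_isIso_app _

end MaxClosure

theorem lim_rightDerived_restrict_isIso_general {α : Type} [DecidableEq α]
    (S : Finset (Finset α))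
    (hdown : ∀ I ∈ S, ∀ J ⊆ I, J ∈ S) (R : Type) [Ring R]
    [EnoughInjectives ((SPoset S)ᵒᵖ ⥤ ModuleCat R)]
    [EnoughInjectives ((SBarPoset S)ᵒᵖ ⥤ ModuleCat R)]
    (M : (SPoset S)ᵒᵖ ⥤ ModuleCat R) (i : ℕ) :
    IsIso ((NatTrans.rightDerived (limRestrictNT S R) i).app M) ∧
      Nonempty
        ((((Functor.whiskeringLeft (SBarPoset S)ᵒᵖ (SPoset S)ᵒᵖ (ModuleCat R)).obj
              (sbarIncl S).op ⋙ lim).rightDerived i).obj M ≅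
          ((lim : ((SBarPoset S)ᵒᵖ ⥤ ModuleCat R) ⥤ ModuleCat R).rightDerived i).obj
            ((sbarIncl S).op ⋙ M)) := by
  have := (maxClosureAdjunction hdown).op.whiskeringLeft_preservesInjectiveObjects
    (E := ModuleCat R)
  have := isIso_limRestrictNT hdown R
  exact ⟨inferInstance, ⟨Functor.rightDerivedCompObjIso _ lim M i⟩⟩

/-- Let `X` be a finite set and `S` a nonempty, downward closed family of
subsets of `X`, and let `S̄ ⊆ S` be the full subposet of intersections of nonempty
collections of maximal elements of `S`.  Then for every ring `R`, every diagram
`M : Sᵒᵖ ⥤ Mod_R` and every `i ≥ 0`, the canonical restriction map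
`lim^i_{Sᵒᵖ} M → lim^i_{S̄ᵒᵖ} (M|_{S̄ᵒᵖ})` is an isomorphism: the natural transformation of
right derived functors induced by the canonical restriction-of-cones transformation
`lim ⟶ (restrict ⋙ lim)` is an isomorphism at `M`, and the target identifies with
`lim^i` of the restricted diagram.  (Enough injectives for the functor categories, true
since they are Grothendieck abelian categories, is recorded as instance arguments.) -/
theorem lim_rightDerived_restrict_isIso {α : Type} [Fintype α] [DecidableEq α]
    (S : Finset (Finset α)) (hne : S.Nonempty)
    (hdown : ∀ I ∈ S, ∀ J ⊆ I, J ∈ S) (R : Type) [Ring R]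
    [EnoughInjectives ((SPoset S)ᵒᵖ ⥤ ModuleCat R)]
    [EnoughInjectives ((SBarPoset S)ᵒᵖ ⥤ ModuleCat R)]
    (M : (SPoset S)ᵒᵖ ⥤ ModuleCat R) (i : ℕ) :
    IsIso ((NatTrans.rightDerived (limRestrictNT S R) i).app M) ∧
      Nonempty
        ((((Functor.whiskeringLeft (SBarPoset S)ᵒᵖ (SPoset S)ᵒᵖ (ModuleCat R)).obj
              (sbarIncl S).op ⋙ lim).rightDerived i).obj M ≅
          ((lim : ((SBarPoset S)ᵒᵖ ⥤ ModuleCat R) ⥤ ModuleCat R).rightDerived i).obj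
            ((sbarIncl S).op ⋙ M)) :=
  lim_rightDerived_restrict_isIso_general S hdown R M i
end
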